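/- Let F(x,y) = ∑_{n,m≥0} a(n,m) x^n y^m be the formal power series over ℤ whose coefficients are the numbers of 2-dimensional rook walks. Then (1 - 2x - 2y + 3xy) · F(x,y) = (1-x)(1-y) as formal power series in two variables; equivalently, F(x,y) = 1/(1 - x/(1-x) - y/(1-y)). -/

import Mathlib

/-- The set of `d`-dimensional rook walks from the origin to `v`: a walk is a
finite sequence of steps, each step adding a positive integer amount to
exactly one coordinate (a step is recorded as a pair of the chosen coordinate
and the positive amount added). -/
def RookWalks (d : ℕ) (v : Fin d → ℕ) : Set (List (Fin d × ℕ)) :=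
  {L | (∀ s ∈ L, 0 < s.2) ∧
       ∀ i : Fin d, (L.map (fun s => if s.1 = i then s.2 else 0)).sum = v i}

/-- The number of `d`-dimensional rook walks from the origin to `v`. -/
noncomputable def rookWalkCount (d : ℕ) (v : Fin d → ℕ) : ℕ :=
  (RookWalks d v).ncard

/-!
Classify the nonempty walks to `v` by the axis `i` of their last step: `F = 1 + ∑ᵢ Sᵢ`, where
`Sᵢ` counts the walks ending with a step along axis `i`. Such a walk either ends with a step of
length one, whose removal leaves an arbitrary walk to `v - eᵢ`, or its last step can be shortened
by one, leaving a walk to `v - eᵢ` that still ends along axis `i`; hence `(1 - xᵢ) Sᵢ = xᵢ F`.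
For `d = 2`, multiplying `F = 1 + S₀ + S₁` by `(1 - x)(1 - y)` and substituting gives the identity.
-/

open Finset MvPowerSeries

section RookWalks

variable {d : ℕ} {v : Fin d → ℕ}

lemma nil_mem_rookWalks_iff : [] ∈ RookWalks d v ↔ v = 0 := by
  simp [RookWalks, funext_iff, eq_comm]

lemma append_singleton_mem_rookWalks_iff {L : List (Fin d × ℕ)} {p : Fin d × ℕ} :
    L ++ [p] ∈ RookWalks d v ↔
      0 < p.2 ∧ p.2 ≤ v p.1 ∧ L ∈ RookWalks d (v - Pi.single p.1 p.2) := by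
  obtain ⟨i, c⟩ := p
  simp only [RookWalks, Set.mem_ofPred_eq, List.mem_append, List.mem_singleton, List.map_append,
    List.sum_append, Pi.sub_apply]
  have coord (j : Fin d) (s : ℕ) : s + (if i = j then c else 0) = v j ↔
      (i = j → c ≤ v j) ∧ s = v j - (Pi.single i c : Fin d → ℕ) j := by
    rcases eq_or_ne i j with rfl | hij
    · simp only [if_true, Pi.single_eq_same, forall_const]
      omega
    · simp [hij]
  simp only [List.map_cons, List.map_nil, List.sum_cons, List.sum_nil, add_zero, coord,
    forall_and, forall_eq', or_imp, forall_eq]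
  tauto

lemma rookWalks_zero : RookWalks d 0 = {[]} := by
  ext L
  rcases L.eq_nil_or_concat' with rfl | ⟨L, p, rfl⟩
  · simpa using nil_mem_rookWalks_iff.2 rfl
  · simp only [append_singleton_mem_rookWalks_iff, Pi.zero_apply, Set.mem_singleton_iff,
      List.append_eq_nil_iff, List.cons_ne_nil, and_false, iff_false]
    omega

def rookLastSteps (v : Fin d → ℕ) : Finset (Fin d × ℕ) :=
  univ.biUnion fun i => {i} ×ˢ Icc 1 (v i)

lemma mem_rookLastSteps {p : Fin d × ℕ} : p ∈ rookLastSteps v ↔ 0 < p.2 ∧ p.2 ≤ v p.1 := by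
  obtain ⟨i, c⟩ := p
  simp only [rookLastSteps, mem_biUnion, mem_univ, true_and, mem_product, mem_singleton, mem_Icc]
  constructor
  · rintro ⟨j, rfl, hc⟩
    exact hc
  · exact fun hc => ⟨i, rfl, hc⟩

lemma rookWalks_eq_biUnion (hv : v ≠ 0) :
    RookWalks d v =
      ⋃ p ∈ rookLastSteps v, (· ++ [p]) '' RookWalks d (v - Pi.single p.1 p.2) := by
  ext L
  rcases L.eq_nil_or_concat' with rfl | ⟨L, p, rfl⟩
  · simpa [nil_mem_rookWalks_iff] using hv
  · simp only [append_singleton_mem_rookWalks_iff, Set.mem_iUnion, Set.mem_image,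
      List.append_singleton_inj, mem_rookLastSteps, exists_prop]
    constructor
    · rintro ⟨hp, hpv, hL⟩
      exact ⟨p, ⟨hp, hpv⟩, L, hL, rfl, rfl⟩
    · rintro ⟨p, ⟨hp, hpv⟩, L, hL, rfl, rfl⟩
      exact ⟨hp, hpv, hL⟩

lemma sub_single_lt_of_mem_rookLastSteps {p : Fin d × ℕ} (hp : p ∈ rookLastSteps v) :
    v - Pi.single p.1 p.2 < v := by
  rw [mem_rookLastSteps] at hp
  refine Pi.lt_def.2 ⟨fun j => tsub_le_self, p.1, ?_⟩
  simp only [Pi.sub_apply, Pi.single_eq_same]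
  omega

theorem rookWalks_finite (v : Fin d → ℕ) : (RookWalks d v).Finite := by
  induction v using WellFoundedLT.induction with
  | _ v ih =>
    rcases eq_or_ne v 0 with rfl | hv
    · rw [rookWalks_zero]
      exact Set.finite_singleton _
    · rw [rookWalks_eq_biUnion hv]
      exact (rookLastSteps v).finite_toSet.biUnion fun p hp =>
        (ih _ (sub_single_lt_of_mem_rookLastSteps hp)).image _

lemma rookWalkCount_zero : rookWalkCount d 0 = 1 := by
  simp [rookWalkCount, rookWalks_zero]

theorem rookWalkCount_eq_sum (hv : v ≠ 0) :
    rookWalkCount d v = ∑ i, ∑ c ∈ range (v i), rookWalkCount d (v - Pi.single i (c + 1)) := by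
  have disjoint : (rookLastSteps v : Set (Fin d × ℕ)).PairwiseDisjoint
      fun p => (· ++ [p]) '' RookWalks d (v - Pi.single p.1 p.2) := by
    intro p _ q _ hpq
    refine Set.disjoint_left.2 ?_
    rintro _ ⟨L, -, rfl⟩ ⟨L', -, h⟩
    exact hpq (List.append_singleton_inj.1 h).2.symm
  rw [rookWalkCount, rookWalks_eq_biUnion hv, ← set_biUnion_coe,
    (rookLastSteps v).finite_toSet.ncard_biUnion (fun p _ => (rookWalks_finite _).image _)
      disjoint,
    finsum_mem_coe_finset,
    sum_finset_product (rookLastSteps v) univ (fun i => Icc 1 (v i)) fun p => by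
      rw [mem_rookLastSteps, mem_Icc]
      simp only [mem_univ, true_and]
      omega]
  refine sum_congr rfl fun i _ => ?_
  rw [← Ico_add_one_right_eq_Icc, sum_Ico_eq_sum_range, Nat.add_sub_cancel]
  refine sum_congr rfl fun c _ => ?_
  rw [add_comm 1 c]
  exact Set.ncard_image_of_injective _ (List.append_left_injective _)

end RookWalks

section GeneratingFunction

variable {d : ℕ}

noncomputable def rookSeries (d : ℕ) : MvPowerSeries (Fin d) ℤ :=
  fun n => rookWalkCount d n

/-- The generating function of the walks whose last step is along axis `i`. -/
noncomputable def lastStepSeries (d : ℕ) (i : Fin d) : MvPowerSeries (Fin d) ℤ :=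
  fun n => ∑ c ∈ range (n i), (rookWalkCount d (⇑n - Pi.single i (c + 1)) : ℤ)

theorem rookSeries_eq_one_add_sum : rookSeries d = 1 + ∑ i, lastStepSeries d i := by
  ext n
  rw [map_add, coeff_one, map_sum]
  simp only [rookSeries, lastStepSeries, coeff_apply]
  rcases eq_or_ne n 0 with rfl | hn
  · simp [rookWalkCount_zero]
  · rw [if_neg hn, zero_add, rookWalkCount_eq_sum (Finsupp.coe_eq_zero.not.2 hn)]
    push_cast
    rfl

theorem one_sub_X_mul_lastStepSeries (i : Fin d) :
    (1 - X i) * lastStepSeries d i = X i * rookSeries d := by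
  ext n
  rw [sub_mul, one_mul, map_sub, X_def, coeff_monomial_mul, coeff_monomial_mul]
  split_ifs with h
  · obtain ⟨k, hk⟩ : ∃ k, n i = k + 1 := Nat.exists_eq_add_of_le' (Finsupp.single_le_iff.1 h)
    have hni : (⇑n - Pi.single i 1 : Fin d → ℕ) i = k := by simp [hk]
    have hshift (c : ℕ) :
        ⇑n - Pi.single i 1 - Pi.single i (c + 1) = ⇑n - Pi.single i (c + 1 + 1) := by
      rw [tsub_tsub, ← Pi.single_add, add_comm 1]
    simp only [one_mul, coeff_apply, lastStepSeries, rookSeries, Finsupp.coe_tsub,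
      Finsupp.single_eq_pi_single, hk, hni, hshift, sum_range_succ']
    abel
  · have hn : n i = 0 := by simpa [Finsupp.single_le_iff] using h
    simp [coeff_apply, lastStepSeries, hn]

end GeneratingFunction

/-- The generating function `F(x,y) = ∑ a(n,m) xⁿ yᵐ` of 2-dimensional rook walk
numbers satisfies `(1 - 2x - 2y + 3xy)·F = (1-x)(1-y)`, i.e.
`F = 1/(1 - x/(1-x) - y/(1-y))`. -/
theorem rook_gf_two_dim
    (F : MvPowerSeries (Fin 2) ℤ)
    (hF : ∀ n : Fin 2 →₀ ℕ, MvPowerSeries.coeff n F =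
      (rookWalkCount 2 (fun i => n i) : ℤ)) :
    (1 - 2 * X 0 - 2 * X 1 + 3 * (X 0 * X 1)) * F
      = (1 - X (0 : Fin 2)) * (1 - X (1 : Fin 2)) := by
  obtain rfl : F = rookSeries 2 := ext hF
  have hsplit := rookSeries_eq_one_add_sum (d := 2)
  rw [Fin.sum_univ_two] at hsplit
  linear_combination (1 - X 0) * (1 - X 1) * hsplit
    + (1 - X 1) * one_sub_X_mul_lastStepSeries (d := 2) 0
    + (1 - X 0) * one_sub_X_mul_lastStepSeries (d := 2) 1
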